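/- arXiv:math/0702591 — 2 statements merged into one kernel-verified Lean document; each statement's English description precedes it below -/
import Mathlib

section
/- With Cor(I₀,I₁,ȳ) defined as the binary-data sample correlation in terms of the counts I₀, I₁ (viewed as a real function of real arguments I₀ ∈ [0, n(1−ȳ)], I₁ ∈ [0, nȳ] with 0 < I₀+I₁ < n), Cor is strictly decreasing in I₀ when I₁ > 0 is fixed. -/
/-- The binary-data correlation function is strictly decreasing in `I₀`
when `I₁ > 0` is fixed. -/
theorem cor_strictAnti_in_I0 (n : ℕ) (hn : 0 < n) (ybar : ℝ)
    (h0 : 0 < ybar) (h1 : ybar < 1)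
    (Cor : ℝ → ℝ → ℝ)
    (hCor : ∀ a b, Cor a b =
      (-ybar * a + (1 - ybar) * b) /
        (Real.sqrt (n * ybar * (1 - ybar)) * Real.sqrt (a + b - (a + b) ^ 2 / n)))
    (I1 : ℝ) (hI1pos : 0 < I1) (hI1 : I1 ≤ n * ybar) :
    ∀ a b : ℝ, 0 ≤ a → b ≤ n * (1 - ybar) →
      0 < a + I1 → a + I1 < n → 0 < b + I1 → b + I1 < n →
      a < b → Cor b I1 < Cor a I1 := by
  intro a b ha hb hs hsn ht htn hab
  have hnpos : (0:ℝ) < n := by exact_mod_cast hn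
  have hKpos : 0 < Real.sqrt ((n:ℝ) * ybar * (1 - ybar)) := by
    apply Real.sqrt_pos.mpr
    have : 0 < 1 - ybar := by linarith
    positivity
  set K := Real.sqrt ((n:ℝ) * ybar * (1 - ybar)) with hKdef
  have hnn : (0:ℝ) < Real.sqrt n := Real.sqrt_pos.mpr hnpos
  -- expand Cor x I1 in terms of s = x + I1
  have expand : ∀ x : ℝ, 0 < x + I1 → x + I1 < n →
      Cor x I1 = (Real.sqrt n / K) *
        ((I1 / n) * (Real.sqrt (n - (x + I1)) / Real.sqrt (x + I1))
          + (I1 / n - ybar) * (Real.sqrt (x + I1) / Real.sqrt (n - (x + I1)))) := by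
    intro x hxp hxn
    set s := x + I1 with hsdef
    have hu : 0 < Real.sqrt s := Real.sqrt_pos.mpr hxp
    have hv : 0 < Real.sqrt (n - s) := Real.sqrt_pos.mpr (by linarith)
    set u := Real.sqrt s with hudef
    set v := Real.sqrt (n - s) with hvdef
    have hu2 : u ^ 2 = s := Real.sq_sqrt hxp.le
    have hv2 : v ^ 2 = (n:ℝ) - s := Real.sq_sqrt (by linarith)
    have hnuv : (n:ℝ) = u ^ 2 + v ^ 2 := by rw [hu2, hv2]; ring
    have hden : Real.sqrt (s - s ^ 2 / n) = u * v / Real.sqrt n := by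
      have : s - s ^ 2 / n = s * (n - s) / n := by field_simp
      rw [this, Real.sqrt_div (by nlinarith), Real.sqrt_mul hxp.le, hudef, hvdef]
    have hnum : -ybar * x + (1 - ybar) * I1 = I1 - ybar * s := by
      rw [hsdef]; ring
    rw [hCor, hnum, hden]
    have hbr : (I1 / n) * (v / u) + (I1 / n - ybar) * (u / v)
        = (I1 - ybar * s) / (u * v) := by
      rw [← hu2, hnuv]
      have h2 : (0:ℝ) < u ^ 2 + v ^ 2 := by positivity
      field_simp
      ring
    rw [hbr, ← hu2]
    field_simp
  rw [expand a hs hsn, expand b ht htn]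
  apply mul_lt_mul_of_pos_left _ (by positivity)
  set s := a + I1 with hsdef
  set t := b + I1 with htdef
  have hst : s < t := by rw [hsdef, htdef]; linarith
  have hus : 0 < Real.sqrt s := Real.sqrt_pos.mpr hs
  have hut : 0 < Real.sqrt t := Real.sqrt_pos.mpr ht
  have hvs : 0 < Real.sqrt (n - s) := Real.sqrt_pos.mpr (by linarith)
  have hvt : 0 < Real.sqrt (n - t) := Real.sqrt_pos.mpr (by linarith)
  have hsq1 : Real.sqrt s < Real.sqrt t := Real.sqrt_lt_sqrt hs.le hst
  have hsq2 : Real.sqrt (n - t) < Real.sqrt (n - s) :=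
    Real.sqrt_lt_sqrt (by linarith) (by linarith)
  have h1 : (I1 / n) * (Real.sqrt (n - t) / Real.sqrt t)
      < (I1 / n) * (Real.sqrt (n - s) / Real.sqrt s) := by
    apply mul_lt_mul_of_pos_left _ (by positivity)
    calc Real.sqrt (n - t) / Real.sqrt t < Real.sqrt (n - s) / Real.sqrt t := by
          exact div_lt_div_of_pos_right hsq2 hut
      _ < Real.sqrt (n - s) / Real.sqrt s := by
          exact div_lt_div_of_pos_left hvs hus hsq1
  have h2 : (I1 / n - ybar) * (Real.sqrt t / Real.sqrt (n - t))
      ≤ (I1 / n - ybar) * (Real.sqrt s / Real.sqrt (n - s)) := by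
    apply mul_le_mul_of_nonpos_left _ _
    · exact div_le_div₀ hut.le hsq1.le hvt hsq2.le
    · have : I1 / n ≤ ybar := by
        rw [div_le_iff₀ hnpos]; linarith [hI1]
      linarith
  linarith
end

section
/- With Cor(I₀,I₁,ȳ) defined as the binary-data sample correlation in terms of the counts I₀, I₁ (viewed as a real function on I₀ ∈ [0, n(1−ȳ)], I₁ ∈ [0, nȳ] with 0 < I₀+I₁ < n), Cor is strictly increasing in I₁ when I₀ > 0 is fixed. -/
lemma key_pos (p I u v nr : ℝ) (hu : 0 < u) (huv : u < v) (hv : v < nr)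
    (hI : 0 < I) (hIu : I ≤ p * u) :
    (p*u - I)^2 * (v*(nr-v)) < (p*v - I)^2 * (u*(nr-u)) := by
  have hp : 0 < p := by nlinarith
  have hpn : I < p * nr := lt_of_le_of_lt hIu (by nlinarith)
  nlinarith [mul_nonneg (mul_nonneg (sub_nonneg.2 hIu)
      (by nlinarith : (0:ℝ) ≤ I*(nr - v) + u*(p*nr - I))) (sub_pos.2 huv).le,
    mul_pos (mul_pos (mul_pos (mul_pos hu hp) (sub_pos.2 huv)) (sub_pos.2 hpn)) (sub_pos.2 huv)]

lemma key_neg (p I u v nr : ℝ) (hu : 0 < u) (huv : u < v) (hv : v < nr)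
    (hI : 0 < I) (hIv : p * v < I) (hIn : I ≤ p * nr) (huv' : 0 < v) :
    (p*v - I)^2 * (u*(nr-u)) < (p*u - I)^2 * (v*(nr-v)) := by
  nlinarith [mul_pos (mul_pos (sub_pos.2 hIv)
      (by nlinarith : (0:ℝ) < I*(nr - u) + v*(p*nr - I))) (sub_pos.2 huv),
    mul_nonneg (mul_nonneg (mul_nonneg (mul_nonneg huv'.le (by nlinarith : (0:ℝ) ≤ p))
      (sub_pos.2 huv).le) (sub_nonneg.2 hIn)) (sub_pos.2 huv).le]

/-- The binary-data correlation function is strictly increasing in `I₁`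
when `I₀ > 0` is fixed. -/
theorem cor_strictMono_in_I1 (n : ℕ) (hn : 0 < n) (ybar : ℝ)
    (h0 : 0 < ybar) (h1 : ybar < 1)
    (Cor : ℝ → ℝ → ℝ)
    (hCor : ∀ a b, Cor a b =
      (-ybar * a + (1 - ybar) * b) /
        (Real.sqrt (n * ybar * (1 - ybar)) * Real.sqrt (a + b - (a + b) ^ 2 / n)))
    (I0 : ℝ) (hI0pos : 0 < I0) (hI0 : I0 ≤ n * (1 - ybar)) :
    ∀ a b : ℝ, 0 ≤ a → b ≤ n * ybar →
      0 < I0 + a → I0 + a < n → 0 < I0 + b → I0 + b < n →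
      a < b → Cor I0 a < Cor I0 b := by
  intro a b ha hb hpa hna hpb hnb hab
  have hnn : (0:ℝ) < n := by exact_mod_cast hn
  have hp : (0:ℝ) < 1 - ybar := by linarith
  set p : ℝ := 1 - ybar with hpdef
  set sa : ℝ := I0 + a with hsa
  set sb : ℝ := I0 + b with hsb
  have hsab : sa < sb := by simp only [hsa, hsb]; linarith
  have hargA : sa - sa^2/(n:ℝ) = sa*((n:ℝ)-sa)/n := by field_simp
  have hargB : sb - sb^2/(n:ℝ) = sb*((n:ℝ)-sb)/n := by field_simp
  have hA0 : 0 < sa*((n:ℝ)-sa)/n := div_pos (mul_pos hpa (by linarith)) hnn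
  have hB0 : 0 < sb*((n:ℝ)-sb)/n := div_pos (mul_pos hpb (by linarith)) hnn
  have hDa : 0 < Real.sqrt (sa - sa^2/(n:ℝ)) := by
    rw [hargA]; exact Real.sqrt_pos.2 hA0
  have hDb : 0 < Real.sqrt (sb - sb^2/(n:ℝ)) := by
    rw [hargB]; exact Real.sqrt_pos.2 hB0
  have hC : 0 < Real.sqrt ((n:ℝ) * ybar * p) := Real.sqrt_pos.2 (by positivity)
  set C := Real.sqrt ((n:ℝ) * ybar * p) with hCdef
  set Da := Real.sqrt (sa - sa^2/(n:ℝ)) with hDadef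
  set Db := Real.sqrt (sb - sb^2/(n:ℝ)) with hDbdef
  have hDa2 : Da^2 = sa*((n:ℝ)-sa)/n := by
    rw [hDadef, Real.sq_sqrt (by rw [hargA]; exact hA0.le)]; exact hargA
  have hDb2 : Db^2 = sb*((n:ℝ)-sb)/n := by
    rw [hDbdef, Real.sq_sqrt (by rw [hargB]; exact hB0.le)]; exact hargB
  have hNA : -ybar * I0 + p * a = p * sa - I0 := by rw [hsa, hpdef]; ring
  have hNB : -ybar * I0 + p * b = p * sb - I0 := by rw [hsb, hpdef]; ring
  rw [hCor, hCor]
  have goal' : (p * sa - I0) * Db < (p * sb - I0) * Da := by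
    rcases le_or_gt I0 (p * sa) with hcase | hcase
    · have hNBpos : 0 < p * sb - I0 := by nlinarith
      have key := key_pos p I0 sa sb (n:ℝ) hpa hsab hnb hI0pos hcase
      refine lt_of_pow_lt_pow_left₀ 2 (mul_pos hNBpos hDa).le ?_
      calc ((p * sa - I0) * Db)^2 = (p * sa - I0)^2 * (sb*((n:ℝ)-sb)) / n := by
            rw [mul_pow, hDb2]; ring
        _ < (p * sb - I0)^2 * (sa*((n:ℝ)-sa)) / n :=
            (div_lt_div_iff_of_pos_right hnn).2 key
        _ = ((p * sb - I0) * Da)^2 := by rw [mul_pow, hDa2]; ring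
    · rcases le_or_gt I0 (p * sb) with hcase2 | hcase2
      · calc (p * sa - I0) * Db < 0 := mul_neg_of_neg_of_pos (by linarith) hDb
          _ ≤ (p * sb - I0) * Da := mul_nonneg (by linarith) hDa.le
      · have key := key_neg p I0 sa sb (n:ℝ) hpa hsab hnb hI0pos hcase2
          (by rw [mul_comm]; exact hI0) hpb
        have h2 : (-(p * sb - I0)) * Da < (-(p * sa - I0)) * Db := by
          refine lt_of_pow_lt_pow_left₀ 2 (mul_pos (by linarith) hDb).le ?_
          calc ((-(p * sb - I0)) * Da)^2 = (p * sb - I0)^2 * (sa*((n:ℝ)-sa)) / n := by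
                rw [mul_pow, hDa2]; ring
            _ < (p * sa - I0)^2 * (sb*((n:ℝ)-sb)) / n :=
                (div_lt_div_iff_of_pos_right hnn).2 key
            _ = ((-(p * sa - I0)) * Db)^2 := by rw [mul_pow, hDb2]; ring
        linarith
  rw [div_lt_div_iff₀ (by positivity) (by positivity), hNA, hNB]
  calc (p * sa - I0) * (C * Db) = C * ((p * sa - I0) * Db) := by ring
    _ < C * ((p * sb - I0) * Da) := (mul_lt_mul_iff_right₀ hC).2 goal'
    _ = (p * sb - I0) * (C * Da) := by ring
end
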